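/- arXiv:1910.02249 — 2 statements merged into one kernel-verified Lean document; each statement's English description precedes it below -/
import Mathlib

section
/- For all real numbers s and t, max(σ(s + t) − σ(t), 0) ≤ max(s/4, 0). -/
/-!
The derivative `σ' = σ (1 - σ)` of the sigmoid never exceeds `1/4`, so by the mean value theorem
`σ (s + t) - σ t ≤ s / 4` when `s ≥ 0`; when `s ≤ 0` the difference is nonpositive since `σ` is monotone.
-/

noncomputable def sigmoid (t : ℝ) : ℝ := 1 / (1 + Real.exp (-t))

theorem sigmoid_eq_real_sigmoid : sigmoid = Real.sigmoid :=
  funext fun _ => one_div _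

theorem mul_one_sub_le_quarter {α : Type*} [Field α] [LinearOrder α] [IsStrictOrderedRing α]
    (p : α) : p * (1 - p) ≤ 1 / 4 := by
  nlinarith [sq_nonneg (2 * p - 1)]

namespace Real

theorem deriv_sigmoid_le_quarter (x : ℝ) : deriv sigmoid x ≤ 1 / 4 := by
  rw [deriv_sigmoid]
  exact mul_one_sub_le_quarter _

theorem sigmoid_sub_sigmoid_le {x y : ℝ} (hxy : x ≤ y) : sigmoid y - sigmoid x ≤ (y - x) / 4 := by
  have := image_sub_le_mul_sub_of_deriv_le differentiable_sigmoid deriv_sigmoid_le_quarter hxy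
  linarith

theorem sigmoid_add_sub_sigmoid_le_max (s t : ℝ) : sigmoid (s + t) - sigmoid t ≤ max (s / 4) 0 := by
  rcases le_total s 0 with hs | hs
  · have : sigmoid (s + t) ≤ sigmoid t := sigmoid_le (by linarith)
    exact le_max_of_le_right (by linarith)
  · have := sigmoid_sub_sigmoid_le (show t ≤ s + t by linarith)
    exact le_max_of_le_left (by simpa using this)

end Real

/-- For all reals `s` and `t`, `max(σ(s + t) - σ(t), 0) ≤ max(s/4, 0)`. -/
theorem mpl_le_score (s t : ℝ) :
    max (sigmoid (s + t) - sigmoid t) 0 ≤ max (s / 4) 0 := by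
  rw [sigmoid_eq_real_sigmoid]
  exact max_le (Real.sigmoid_add_sub_sigmoid_le_max s t) (le_max_right _ _)
end

section
/- Let π be a probability measure on a measurable space Θ, B ≥ 0 a constant, and l_1, …, l_n : Θ → ℝ measurable functions with |l_i(θ)| ≤ B for all i and θ. Define Z_D = ∫ exp(−∑_{i=1}^{n} l_i(θ)) dπ(θ) and Z_S = ∫ exp(−∑_{i=1}^{n−1} l_i(θ)) dπ(θ), and let p_D and p_S be the probability measures on Θ with densities exp(−∑_{i=1}^{n} l_i)/Z_D and exp(−∑_{i=1}^{n−1} l_i)/Z_S with respect to π, respectively. Then for every measurable g : Θ → ℝ with |g(θ)| ≤ B for all θ, |∫ g dp_S − ∫ g dp_D| ≤ B(e^{2B} − 1). -/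
/-!
`p_D` is the exponential tilt of `p_S` by `-l_n`. As `|l_n| ≤ B`, the normaliser of this tilt
lies in `[e^{-B}, e^B]`, so the density `dp_D/dp_S` lies in `[e^{-2B}, e^{2B}]` and differs from
`1` by at most `e^{2B} - 1`; integrating this against `|g| ≤ B` gives the bound.
-/

open MeasureTheory

section

open Real

lemma abs_one_sub_le_exp_sub_one {w a : ℝ} (hlo : exp (-a) ≤ w) (hhi : w ≤ exp a) :
    |1 - w| ≤ exp a - 1 := by
  have := add_one_le_exp a
  have := add_one_le_exp (-a)
  rw [abs_le]
  constructor <;> linarith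

lemma abs_one_sub_exp_div_le {t Z A : ℝ} (ht : |t| ≤ A) (hZlo : exp (-A) ≤ Z)
    (hZhi : Z ≤ exp A) : |1 - exp t / Z| ≤ exp (2 * A) - 1 := by
  obtain ⟨htlo, hthi⟩ := abs_le.1 ht
  apply abs_one_sub_le_exp_sub_one
  · calc exp (-(2 * A)) = exp (-A) / exp A := by rw [← exp_sub]; ring_nf
      _ ≤ exp t / Z :=
        div_le_div₀ (exp_pos _).le (exp_le_exp.2 htlo) ((exp_pos _).trans_le hZlo) hZhi
  · calc exp t / Z ≤ exp A / exp (-A) :=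
          div_le_div₀ (exp_pos _).le (exp_le_exp.2 hthi) (exp_pos _) hZlo
      _ = exp (2 * A) := by rw [← exp_sub]; ring_nf

variable {α : Type*} [MeasurableSpace α] {ν : Measure α} {f g : α → ℝ} {A B : ℝ}

lemma integrable_exp_of_abs_le [IsFiniteMeasure ν] (hf : AEMeasurable f ν) (hfA : ∀ x, |f x| ≤ A) :
    Integrable (fun x ↦ exp (f x)) ν :=
  .of_bound hf.exp.aestronglyMeasurable (exp A) <| ae_of_all _ fun x ↦ by
    rw [norm_of_nonneg (exp_pos _).le]
    exact exp_le_exp.2 (abs_le.1 (hfA x)).2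

lemma integral_exp_mem_Icc_of_abs_le [IsProbabilityMeasure ν] (hf : AEMeasurable f ν) (hfA : ∀ x, |f x| ≤ A) :
    ∫ x, exp (f x) ∂ν ∈ Set.Icc (exp (-A)) (exp A) := by
  have hint := integrable_exp_of_abs_le hf hfA
  constructor
  · simpa using integral_mono (integrable_const _) hint
      fun x ↦ exp_le_exp.2 (abs_le.1 (hfA x)).1
  · simpa using integral_mono hint (integrable_const _)
      fun x ↦ exp_le_exp.2 (abs_le.1 (hfA x)).2

theorem abs_integral_sub_integral_tilted_le [IsProbabilityMeasure ν] (hf : AEMeasurable f ν)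
    (hfA : ∀ x, |f x| ≤ A) (hg : AEStronglyMeasurable g ν) (hgB : ∀ x, |g x| ≤ B) :
    |∫ x, g x ∂ν - ∫ x, g x ∂ν.tilted f| ≤ B * (exp (2 * A) - 1) := by
  obtain ⟨hZlo, hZhi⟩ := integral_exp_mem_Icc_of_abs_le hf hfA
  set Z := ∫ x, exp (f x) ∂ν
  have hg_int : Integrable g ν := .of_bound hg B (ae_of_all _ hgB)
  have hwg_int : Integrable (fun x ↦ exp (f x) / Z * g x) ν :=
    hg_int.bdd_mul (hf.exp.div_const Z).aestronglyMeasurable (c := exp A / exp (-A)) <|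
      ae_of_all _ fun x ↦ by
        rw [norm_of_nonneg (div_nonneg (exp_pos _).le ((exp_pos _).le.trans hZlo))]
        exact div_le_div₀ (exp_pos _).le (exp_le_exp.2 (abs_le.1 (hfA x)).2) (exp_pos _) hZlo
  have hpointwise : ∀ x, ‖(1 - exp (f x) / Z) * g x‖ ≤ (exp (2 * A) - 1) * B := fun x ↦ by
    have hw := abs_one_sub_exp_div_le (hfA x) hZlo hZhi
    rw [Real.norm_eq_abs, abs_mul]
    exact mul_le_mul hw (hgB x) (abs_nonneg _) ((abs_nonneg _).trans hw)
  calc |∫ x, g x ∂ν - ∫ x, g x ∂ν.tilted f|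
      = ‖∫ x, (1 - exp (f x) / Z) * g x ∂ν‖ := by
        simp only [integral_tilted, smul_eq_mul, sub_mul, one_mul]
        rw [integral_sub hg_int hwg_int, Real.norm_eq_abs]
    _ ≤ (exp (2 * A) - 1) * B := by
        simpa using norm_integral_le_of_norm_le_const (μ := ν) (ae_of_all _ hpointwise)
    _ = B * (exp (2 * A) - 1) := mul_comm _ _

end

theorem leave_one_out_bound_general {Θ : Type*} [MeasurableSpace Θ]
    (π : Measure Θ) [IsProbabilityMeasure π]
    (n : ℕ) (hn : 1 ≤ n) (B : ℝ)
    (l : ℕ → Θ → ℝ) (hlm : ∀ i, Measurable (l i)) (hlb : ∀ i θ, |l i θ| ≤ B)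
    (ZD ZS : ℝ)
    (hZD : ZD = ∫ θ, Real.exp (-(∑ i ∈ Finset.range n, l i θ)) ∂π)
    (hZS : ZS = ∫ θ, Real.exp (-(∑ i ∈ Finset.range (n - 1), l i θ)) ∂π)
    (pD pS : Measure Θ)
    (hpD : pD = π.withDensity
      (fun θ => ENNReal.ofReal (Real.exp (-(∑ i ∈ Finset.range n, l i θ)) / ZD)))
    (hpS : pS = π.withDensity
      (fun θ => ENNReal.ofReal (Real.exp (-(∑ i ∈ Finset.range (n - 1), l i θ)) / ZS)))
    (g : Θ → ℝ) (hgm : Measurable g) (hgb : ∀ θ, |g θ| ≤ B) :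
    |(∫ θ, g θ ∂pS) - ∫ θ, g θ ∂pD| ≤ B * (Real.exp (2 * B) - 1) := by
  obtain ⟨m, rfl⟩ : ∃ m, n = m + 1 := ⟨n - 1, (Nat.succ_pred_eq_of_pos hn).symm⟩
  set potential : ℕ → Θ → ℝ := fun k θ ↦ -∑ i ∈ Finset.range k, l i θ
  have hpotential_meas (k : ℕ) : Measurable (potential k) :=
    (Finset.measurable_sum _ fun i _ ↦ hlm i).neg
  have hpotential_bound (k : ℕ) (θ : Θ) : |potential k θ| ≤ k * B := by
    simpa [potential, abs_neg] using Finset.abs_sum_le_sum_abs (fun i ↦ l i θ) (Finset.range k)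
      |>.trans (Finset.sum_le_sum fun i _ ↦ hlb i θ)
  have hpS : pS = π.tilted (potential m) := by subst hZS hpS; rfl
  have hpD : pD = π.tilted (potential (m + 1)) := by subst hZD hpD; rfl
  have hpotential_succ : potential (m + 1) = potential m + fun θ ↦ -l m θ := by
    ext θ
    simp only [potential, Finset.sum_range_succ, Pi.add_apply]
    ring
  have hint : Integrable (fun θ ↦ Real.exp (potential m θ)) π :=
    integrable_exp_of_abs_le (hpotential_meas m).aemeasurable (hpotential_bound m)
  have : IsProbabilityMeasure pS := hpS ▸ isProbabilityMeasure_tilted hint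
  rw [hpD, hpotential_succ, ← tilted_tilted hint, ← hpS]
  exact abs_integral_sub_integral_tilted_le (hlm m).neg.aemeasurable
    (fun θ ↦ (abs_neg _).trans_le (hlb m θ)) hgm.aestronglyMeasurable hgb

/-- Bound of the leave-one-out error (paper's Lemma 2). Let `π` be a prior over
parameters, `l i` the per-sample negative log-likelihoods bounded by `B`, `p_D` the
posterior given samples `z_1, …, z_n` and `p_S` the posterior given `z_1, …, z_{n-1}`
(densities `exp(-∑ l_i)/Z` w.r.t. `π`). Then for any `g` bounded by `B`,
`|E_{p_S}[g] - E_{p_D}[g]| ≤ B(e^{2B} - 1)`. -/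
theorem leave_one_out_bound {Θ : Type*} [MeasurableSpace Θ]
    (π : Measure Θ) [IsProbabilityMeasure π]
    (n : ℕ) (hn : 1 ≤ n) (B : ℝ) (hB : 0 ≤ B)
    (l : ℕ → Θ → ℝ) (hlm : ∀ i, Measurable (l i)) (hlb : ∀ i θ, |l i θ| ≤ B)
    (ZD ZS : ℝ)
    (hZD : ZD = ∫ θ, Real.exp (-(∑ i ∈ Finset.range n, l i θ)) ∂π)
    (hZS : ZS = ∫ θ, Real.exp (-(∑ i ∈ Finset.range (n - 1), l i θ)) ∂π)
    (pD pS : Measure Θ)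
    (hpD : pD = π.withDensity
      (fun θ => ENNReal.ofReal (Real.exp (-(∑ i ∈ Finset.range n, l i θ)) / ZD)))
    (hpS : pS = π.withDensity
      (fun θ => ENNReal.ofReal (Real.exp (-(∑ i ∈ Finset.range (n - 1), l i θ)) / ZS)))
    (g : Θ → ℝ) (hgm : Measurable g) (hgb : ∀ θ, |g θ| ≤ B) :
    |(∫ θ, g θ ∂pS) - ∫ θ, g θ ∂pD| ≤ B * (Real.exp (2 * B) - 1) :=
  leave_one_out_bound_general π n hn B l hlm hlb ZD ZS hZD hZS pD pS hpD hpS g hgm hgb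
end
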